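/- Let A ∈ ℂ^{n×n} and B = diag(b₁,…,bₙ) a real diagonal matrix with B ≠ 0. Define the Hermitian matrix H̃₁ = [[H₁ᴬ, B/2],[Bᵀ/2, 0]] ∈ ℂ^{2n×2n}, where H₁ᴬ = (A+A†)/2. Then H̃₁ has at least one strictly positive eigenvalue and at least one strictly negative eigenvalue. -/

import Mathlib

/-!
If `b i ≠ 0`, then on the vectors `eᵢ ⊕ s eᵢ` the quadratic form of `H̃₁` equals
`Re (H₁ᴬ)ᵢᵢ + s bᵢ`, so it takes every real value, in particular `1` and `-1`. A Hermitian
matrix whose eigenvalues are all nonnegative is positive semidefinite, so a negative value of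
its quadratic form forces a negative eigenvalue; applied to `-H̃₁`, a positive value forces a
positive one.
-/

open Matrix
open scoped ComplexOrder

namespace Matrix.IsHermitian

variable {𝕜 n : Type*} [RCLike 𝕜] [Fintype n] [DecidableEq n] {M : Matrix n n 𝕜}

theorem exists_neg_mem_spectrum_of_re_dotProduct_mulVec_neg (hM : M.IsHermitian)
    {x : n → 𝕜} (hx : RCLike.re (star x ⬝ᵥ M *ᵥ x) < 0) :
    ∃ μ : ℝ, μ < 0 ∧ μ ∈ spectrum ℝ M := by
  by_contra! h
  have hPSD : M.PosSemidef := hM.posSemidef_iff_eigenvalues_nonneg.mpr fun j =>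
    le_of_not_gt fun hj => h _ hj (hM.eigenvalues_mem_spectrum_real j)
  exact hx.not_ge (hPSD.re_dotProduct_nonneg x)

theorem exists_pos_mem_spectrum_of_re_dotProduct_mulVec_pos (hM : M.IsHermitian)
    {x : n → 𝕜} (hx : 0 < RCLike.re (star x ⬝ᵥ M *ᵥ x)) :
    ∃ μ : ℝ, 0 < μ ∧ μ ∈ spectrum ℝ M := by
  obtain ⟨μ, hμ, hμM⟩ := hM.neg.exists_neg_mem_spectrum_of_re_dotProduct_mulVec_neg (x := x)
    (by simpa [neg_mulVec] using hx)
  exact ⟨-μ, neg_pos.mpr hμ, by rwa [← Set.mem_neg, spectrum.neg_eq]⟩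

end Matrix.IsHermitian

theorem Matrix.dotProduct_mulVec_fromBlocks_single_sumElim_single {m α : Type*} [Fintype m]
    [DecidableEq m] [CommSemiring α] [StarRing α] (P Q R S : Matrix m m α) (i : m) (c : α) :
    star (Pi.single i 1 ⊕ᵥ Pi.single i c) ⬝ᵥ fromBlocks P Q R S *ᵥ (Pi.single i 1 ⊕ᵥ Pi.single i c)
      = P i i + Q i i * c + star c * (R i i + S i i * c) := by
  rw [fromBlocks_mulVec, Function.star_sumElim, sumElim_dotProduct_sumElim]
  simp [mulVec_single]
  ring

/-- If `A ∈ ℂ^{n×n}` and `B` is a nonzero real diagonal matrix, then the Hermitian block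
matrix `H̃₁ = [[H₁ᴬ, B/2],[Bᵀ/2, 0]]`, with `H₁ᴬ = (A + Aᴴ)/2`, has at least one strictly
positive and at least one strictly negative (real) eigenvalue. -/
theorem tildeH1_has_pos_and_neg_eigenvalue {n : ℕ} (A : Matrix (Fin n) (Fin n) ℂ)
    (b : Fin n → ℝ) (hb : Matrix.diagonal b ≠ 0)
    (H1A : Matrix (Fin n) (Fin n) ℂ) (hH1A : H1A = (2 : ℂ)⁻¹ • (A + Aᴴ))
    (Ht1 : Matrix (Fin n ⊕ Fin n) (Fin n ⊕ Fin n) ℂ)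
    (hHt1 : Ht1 = Matrix.fromBlocks H1A
      ((2 : ℂ)⁻¹ • (Matrix.diagonal b).map Complex.ofReal)
      ((2 : ℂ)⁻¹ • ((Matrix.diagonal b).map Complex.ofReal)ᵀ) 0) :
    (∃ μ : ℝ, 0 < μ ∧ (μ : ℂ) ∈ spectrum ℂ Ht1) ∧
    (∃ μ : ℝ, μ < 0 ∧ (μ : ℂ) ∈ spectrum ℂ Ht1) := by
  obtain ⟨i, hbi⟩ : ∃ i, b i ≠ 0 := Function.ne_iff.mp fun h => hb (by simp [h])
  rw [diagonal_map Complex.ofReal_zero] at hHt1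
  have hHerm : Ht1.IsHermitian := hHt1 ▸ .fromBlocks
    (hH1A ▸ (isHermitian_add_transpose_self A).smul (by simp)) (by simp) isHermitian_zero
  have hsurj (t : ℝ) : ∃ x, RCLike.re (star x ⬝ᵥ Ht1 *ᵥ x) = t := by
    refine ⟨Pi.single i 1 ⊕ᵥ Pi.single i ((t - (H1A i i).re) / b i : ℝ), ?_⟩
    rw [hHt1, dotProduct_mulVec_fromBlocks_single_sumElim_single]
    simp [field]
    ring
  have hcomplex {μ : ℝ} (h : μ ∈ spectrum ℝ Ht1) : (μ : ℂ) ∈ spectrum ℂ Ht1 := by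
    simpa using spectrum.algebraMap_mem ℂ h
  obtain ⟨xPos, hxPos⟩ := hsurj 1
  obtain ⟨xNeg, hxNeg⟩ := hsurj (-1)
  obtain ⟨μPos, hμPos, hμPosH⟩ :=
    hHerm.exists_pos_mem_spectrum_of_re_dotProduct_mulVec_pos (hxPos ▸ one_pos)
  obtain ⟨μNeg, hμNeg, hμNegH⟩ :=
    hHerm.exists_neg_mem_spectrum_of_re_dotProduct_mulVec_neg (hxNeg ▸ neg_one_lt_zero)
  exact ⟨⟨μPos, hμPos, hcomplex hμPosH⟩, ⟨μNeg, hμNeg, hcomplex hμNegH⟩⟩
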